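/- arXiv:2504.11728 — 4 statements merged into one kernel-verified Lean document; each statement's English description precedes it below -/
import Mathlib

section
/- Let M = (U, 𝓘) be a matroid with finite ground set and weight function w : U → ℝ. Let I, O ⊆ U be disjoint subsets and let P*, Q* ∈ 𝓑*(I,O). Then for every element y ∈ Q* \ P* of minimum weight among the elements of Q* \ P*, there exists an element x ∈ P* \ Q* such that (x, y) is an I,O-preserving zero-exchange for P*; furthermore, this x has minimum weight among the elements of P* \ Q*. -/
variable {α : Type*}

/-- The total weight of a set of elements. -/
noncomputable def wsum (w : α → ℝ) (S : Set α) : ℝ := ∑ᶠ x ∈ S, w x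

/-- `B` is a minimum-weight basis of the matroid `M` w.r.t. the weight function `w`. -/
def MinBase (M : Matroid α) (w : α → ℝ) (B : Set α) : Prop :=
  M.IsBase B ∧ ∀ B', M.IsBase B' → wsum w B ≤ wsum w B'

/-- `B ∈ 𝓑*(I,O)`: `B` is a minimum basis containing all of `I` and avoiding `O`. -/
def BStar (M : Matroid α) (w : α → ℝ) (I O B : Set α) : Prop :=
  MinBase M w B ∧ I ⊆ B ∧ B ∩ O = ∅

/-- `(x, y)` is an exchange for the basis `B`. -/
def IsExchange (M : Matroid α) (B : Set α) (x y : α) : Prop :=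
  x ∈ B ∧ y ∉ B ∧ M.IsBase ((B \ {x}) ∪ {y})

/-- An element is relevant if it belongs to some minimum basis. -/
def Relevant (M : Matroid α) (w : α → ℝ) (x : α) : Prop :=
  ∃ B, MinBase M w B ∧ x ∈ B


lemma wsum_insert (w : α → ℝ) {S : Set α} (hS : S.Finite) {a : α} (ha : a ∉ S) :
    wsum w (insert a S) = w a + wsum w S :=
  finsum_mem_insert w ha hS

lemma wsum_swap (w : α → ℝ) {B : Set α} (hB : B.Finite) {x y : α}
    (hx : x ∈ B) (hy : y ∉ B) :
    wsum w (insert y (B \ {x})) = wsum w B - w x + w y := by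
  have h1 : wsum w (insert y (B \ {x})) = w y + wsum w (B \ {x}) :=
    wsum_insert w hB.diff (fun h => hy h.1)
  have h2 : wsum w B = w x + wsum w (B \ {x}) := by
    have : insert x (B \ {x}) = B := by
      ext z; simp [Set.mem_insert_iff]; rintro rfl; exact hx
    calc wsum w B = wsum w (insert x (B \ {x})) := by rw [this]
      _ = w x + wsum w (B \ {x}) := wsum_insert w hB.diff (by simp)
  linarith

/-- reverse exchange: insert a specified element, remove some element. -/
lemma rev_exchange {M : Matroid α} {P Q : Set α} (hP : M.IsBase P) (hQ : M.IsBase Q)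
    {y : α} (hy : y ∈ Q \ P) : ∃ x ∈ P \ Q, M.IsBase (insert y (P \ {x})) := by
  have hPd := hP.compl_isBase_dual
  have hQd := hQ.compl_isBase_dual
  have hyE : y ∈ M.E := hQ.subset_ground hy.1
  have hy' : y ∈ (M.E \ P) \ (M.E \ Q) := ⟨⟨hyE, hy.2⟩, fun h => h.2 hy.1⟩
  obtain ⟨x, hx, hB⟩ := hPd.exchange hQd hy'
  have hxE : x ∈ M.E := hx.1.1
  have hxP : x ∈ P := by by_contra h; exact hx.2 ⟨hxE, h⟩
  have hxQ : x ∉ Q := hx.1.2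
  refine ⟨x, ⟨hxP, hxQ⟩, ?_⟩
  have hbase := hB.compl_isBase_of_dual
  have hPE : P ⊆ M.E := hP.subset_ground
  have hEq : M.E \ insert x ((M.E \ P) \ {y}) = insert y (P \ {x}) := by
    ext z
    simp only [Set.mem_diff, Set.mem_insert_iff, Set.mem_singleton_iff]
    constructor
    · rintro ⟨hzE, hz⟩
      push_neg at hz
      by_cases hzy : z = y
      · exact Or.inl hzy
      · refine Or.inr ⟨?_, hz.1⟩
        by_contra hzP
        exact hzy (hz.2 ⟨hzE, hzP⟩)
    · rintro (rfl | ⟨hzP, hzx⟩)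
      · refine ⟨hyE, ?_⟩
        push_neg
        exact ⟨fun h => hy.2 (h ▸ hxP), fun _ => rfl⟩
      · refine ⟨hPE hzP, ?_⟩
        push_neg
        exact ⟨hzx, fun h => (h.2 hzP).elim⟩
  rwa [hEq] at hbase

/-- For minimum bases `P*, Q* ∈ 𝓑*(I,O)` and any minimum-weight `y ∈ Q* \ P*`, there is an
`x ∈ P* \ Q*` such that `(x,y)` is an `I,O`-preserving zero-exchange for `P*`, and moreover
`x` has minimum weight in `P* \ Q*`. -/
theorem stmt_0 (M : Matroid α) (hfin : M.E.Finite) (w : α → ℝ)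
    (I O : Set α) (hIO : Disjoint I O)
    (P Q : Set α) (hP : BStar M w I O P) (hQ : BStar M w I O Q)
    (y : α) (hy : y ∈ Q \ P) (hymin : ∀ z ∈ Q \ P, w y ≤ w z) :
    ∃ x ∈ P \ Q, IsExchange M P x y ∧ w y = w x ∧
      BStar M w I O ((P \ {x}) ∪ {y}) ∧ ∀ z ∈ P \ Q, w x ≤ w z := by
  obtain ⟨⟨hPbase, hPmin⟩, hIP, hPO⟩ := hP
  obtain ⟨⟨hQbase, hQmin⟩, hIQ, hQO⟩ := hQ
  have hPfin : P.Finite := hfin.subset hPbase.subset_ground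
  have hQfin : Q.Finite := hfin.subset hQbase.subset_ground
  have hkey : ∀ z ∈ P \ Q, w y ≤ w z := by
    intro z hz
    obtain ⟨u, hu, hB⟩ := rev_exchange hQbase hPbase hz
    have h1 : wsum w (insert z (Q \ {u})) = wsum w Q - w u + w z :=
      wsum_swap w hQfin hu.1 hz.2
    have h2 := hQmin _ hB
    have h3 : w u ≤ w z := by rw [h1] at h2; linarith
    exact le_trans (hymin u hu) h3
  obtain ⟨x, hxPQ, hBx⟩ := rev_exchange hPbase hQbase hy
  have h1 : wsum w (insert y (P \ {x})) = wsum w P - w x + w y :=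
    wsum_swap w hPfin hxPQ.1 hy.2
  have h2 := hPmin _ hBx
  have hxy : w x ≤ w y := by rw [h1] at h2; linarith
  have hwe : w y = w x := le_antisymm (hkey x hxPQ) hxy
  have hset : (P \ {x}) ∪ {y} = insert y (P \ {x}) := Set.union_singleton
  refine ⟨x, hxPQ, ⟨hxPQ.1, hy.2, by rw [hset]; exact hBx⟩, hwe, ?_,
    fun z hz => hwe ▸ hkey z hz⟩
  have hwP' : wsum w ((P \ {x}) ∪ {y}) = wsum w P := by rw [hset, h1]; linarith
  refine ⟨⟨by rw [hset]; exact hBx, fun B' hB' => by rw [hwP']; exact hPmin B' hB'⟩, ?_, ?_⟩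
  · intro i hi
    by_cases hix : i = x
    · exact absurd (hIQ hi) (hix ▸ hxPQ.2)
    · exact Or.inl ⟨hIP hi, hix⟩
  · apply Set.eq_empty_iff_forall_notMem.2
    rintro z ⟨(⟨hzP, _⟩ | hzy), hzO⟩
    · exact (Set.eq_empty_iff_forall_notMem.1 hPO z) ⟨hzP, hzO⟩
    · have : z = y := Set.mem_singleton_iff.1 hzy
      exact (Set.eq_empty_iff_forall_notMem.1 hQO z) ⟨this ▸ hy.1, hzO⟩
end

section
/- Let M = (U, 𝓘) be a matroid with finite ground set and weight function w : U → ℝ. For any two minimum bases P* and Q* of M, the multiset of weights {w(x) : x ∈ P*} equals the multiset of weights {w(y) : y ∈ Q*}; equivalently, if P* = {x_1,…,x_r} and Q* = {y_1,…,y_r} with w(x_1) ≤ … ≤ w(x_r) and w(y_1) ≤ … ≤ w(y_r), then w(x_i) = w(y_i) for all i = 1,…,r. -/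
variable {α : Type*}

lemma wsum_eq_finsetSum (w : α → ℝ) {S : Set α} (hS : S.Finite) :
    wsum w S = ∑ x ∈ hS.toFinset, w x := by
  rw [wsum, ← finsum_mem_coe_finset, Set.Finite.coe_toFinset]

lemma wsum_exchange (w : α → ℝ) {P : Set α} (hPfin : P.Finite) {x y : α}
    (hx : x ∈ P) (hy : y ∉ P) :
    wsum w (insert y (P \ {x})) = wsum w P - w x + w y := by
  classical
  have hfin' : (insert y (P \ {x})).Finite := (hPfin.diff).insert y
  rw [wsum_eq_finsetSum w hfin', wsum_eq_finsetSum w hPfin]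
  have h1 : hfin'.toFinset = insert y (hPfin.toFinset.erase x) := by
    ext a
    simp [Set.Finite.mem_toFinset, Finset.mem_insert, Finset.mem_erase, and_comm]
  rw [h1, Finset.sum_insert (by simp [hy, Set.Finite.mem_toFinset])]
  have h2 : ∑ a ∈ hPfin.toFinset.erase x, w a = (∑ a ∈ hPfin.toFinset, w a) - w x := by
    rw [Finset.sum_erase_eq_sub (by simpa [Set.Finite.mem_toFinset] using hx)]
  rw [h2]; ring

/-- In a minimum basis, any exchange (with the result a basis) does not decrease weight. -/
lemma exchange_weight_le (M : Matroid α) (w : α → ℝ) {P : Set α}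
    (hP : MinBase M w P) (hPfin : P.Finite) {x y : α}
    (hx : x ∈ P) (hy : y ∉ P) (hB : M.IsBase (insert y (P \ {x}))) :
    w x ≤ w y := by
  have h := hP.2 _ hB
  rw [wsum_exchange w hPfin hx hy] at h
  linarith

lemma key_aux (M : Matroid α) (w : α → ℝ) :
    ∀ n : ℕ, ∀ P Q : Set α, ∀ hP : MinBase M w P, ∀ hQ : MinBase M w Q,
    ∀ hPfin : P.Finite, ∀ hQfin : Q.Finite,
    ((hPfin.diff (t := Q)).toFinset.card = n) →
    Multiset.map w hPfin.toFinset.val = Multiset.map w hQfin.toFinset.val := by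
  classical
  intro n
  induction n with
  | zero =>
    intro P Q hP hQ hPfin hQfin hcard
    have hsub : P ⊆ Q := by
      rw [Finset.card_eq_zero] at hcard
      intro a ha
      by_contra haQ
      have : a ∈ (hPfin.diff (t := Q)).toFinset := by simp [Set.Finite.mem_toFinset, ha, haQ]
      simp [hcard] at this
    have : P = Q := hP.1.eq_of_subset_isBase hQ.1 hsub
    subst this
    rfl
  | succ n ih =>
    intro P Q hP hQ hPfin hQfin hcard
    -- P \ Q is nonempty; pick x of maximal weight in P \ Q
    have hne : (hPfin.diff (t := Q)).toFinset.Nonempty := by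
      rw [← Finset.card_pos, hcard]; omega
    obtain ⟨x, hxmem, hxmax⟩ := Finset.exists_max_image _ w hne
    rw [Set.Finite.mem_toFinset] at hxmem
    -- Q \ P is nonempty; pick y0 of maximal weight in Q \ P
    have hQPne : (Q \ P).Nonempty := by
      by_contra h
      rw [Set.not_nonempty_iff_eq_empty] at h
      have h2 := hP.1.encard_diff_comm hQ.1
      rw [h, Set.encard_empty, Set.encard_eq_zero] at h2
      exact absurd h2 (Set.nonempty_iff_ne_empty.mp ⟨x, hxmem⟩)
    have hQPfin := hQfin.diff (t := P)
    obtain ⟨y0, hy0mem, hy0max⟩ := Finset.exists_max_image _ w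
      (by rwa [← Set.Finite.toFinset_nonempty hQPfin] at hQPne : hQPfin.toFinset.Nonempty)
    rw [Set.Finite.mem_toFinset] at hy0mem
    -- exchange from Q at y0 : get x' ∈ P \ Q with w y0 ≤ w x'
    obtain ⟨x', hx', hQ'base⟩ := hQ.1.exchange hP.1 hy0mem
    have hwy0 : w y0 ≤ w x' := exchange_weight_le M w hQ hQfin hy0mem.1 hx'.2 hQ'base
    -- exchange from P at x : get y ∈ Q \ P with P' base and w x ≤ w y
    obtain ⟨y, hy, hP'base⟩ := hP.1.exchange hQ.1 hxmem
    have hwx : w x ≤ w y := exchange_weight_le M w hP hPfin hxmem.1 hy.2 hP'base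
    -- w y ≤ w y0 ≤ w x' ≤ w x, so w x = w y
    have hwxy : w x = w y := by
      have h1 : w y ≤ w y0 := hy0max y (by simpa [Set.Finite.mem_toFinset] using hy)
      have h2 : w x' ≤ w x := hxmax x' (by simpa [Set.Finite.mem_toFinset] using hx')
      linarith
    -- P' is a minimum basis
    set P' : Set α := insert y (P \ {x}) with hP'def
    have hP'fin : P'.Finite := (hPfin.diff).insert y
    have hP'min : MinBase M w P' := by
      refine ⟨hP'base, fun B' hB' => ?_⟩
      rw [wsum_exchange w hPfin hxmem.1 hy.2, ← hwxy]
      have := hP.2 B' hB'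
      linarith
    -- card of P' \ Q is n
    have hcard' : ((hP'fin.diff (t := Q)).toFinset.card = n) := by
      have hset : P' \ Q = (P \ Q) \ {x} := by
        ext a
        simp only [hP'def, Set.mem_diff, Set.mem_insert_iff, Set.mem_singleton_iff]
        constructor
        · rintro ⟨rfl | ⟨haP, hax⟩, haQ⟩
          · exact absurd hy.1 haQ
          · exact ⟨⟨haP, haQ⟩, hax⟩
        · rintro ⟨⟨haP, haQ⟩, hax⟩
          exact ⟨Or.inr ⟨haP, hax⟩, haQ⟩
      have hfs : (hP'fin.diff (t := Q)).toFinset = (hPfin.diff (t := Q)).toFinset.erase x := by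
        ext a
        simp [Set.Finite.mem_toFinset, hset, Set.mem_diff, and_comm]
      rw [hfs, Finset.card_erase_of_mem (by simpa [Set.Finite.mem_toFinset] using hxmem), hcard]
      omega
    have hPP' : Multiset.map w hPfin.toFinset.val = Multiset.map w hP'fin.toFinset.val := by
      have hxF : x ∈ hPfin.toFinset := by simpa [Set.Finite.mem_toFinset] using hxmem.1
      have hfs : hP'fin.toFinset = insert y (hPfin.toFinset.erase x) := by
        ext a
        simp [Set.Finite.mem_toFinset, hP'def, Finset.mem_insert, Finset.mem_erase, and_comm]
      have hyF : y ∉ hPfin.toFinset.erase x := by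
        simp [Set.Finite.mem_toFinset, hy.2]
      rw [hfs, Finset.insert_val_of_notMem hyF, Finset.erase_val,
        Multiset.map_cons]
      conv_lhs => rw [← Multiset.cons_erase (Finset.mem_def.mp hxF)]
      rw [Multiset.map_cons, hwxy]
    rw [hPP']
    exact ih P' Q hP'min hQ hP'fin hQfin hcard'

/-- Any two minimum bases of a matroid have the same multiset of element weights. -/
theorem stmt_5 (M : Matroid α) (hfin : M.E.Finite) (w : α → ℝ)
    (P Q : Set α) (hP : MinBase M w P) (hQ : MinBase M w Q)
    (hPfin : P.Finite) (hQfin : Q.Finite) :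
    Multiset.map w hPfin.toFinset.val = Multiset.map w hQfin.toFinset.val :=
  key_aux M w _ P Q hP hQ hPfin hQfin rfl
end

section
/- Let G be a finite connected undirected graph with nonnegative edge weights and let 𝒳 = {X_1,…,X_k} be a partition of V(G). If Λ(𝒳) = ∅, then no cut of G/𝒳 is a relevant cut of G. -/
variable {V : Type*} [Fintype V] [DecidableEq V]

/-- `E(W;G)`: the set of edges of `G` with exactly one endpoint in `W`. -/
def cutEdges (G : SimpleGraph V) (W : Set V) : Set (Sym2 V) :=
  {e | e ∈ G.edgeSet ∧ ∃ u v, e = s(u, v) ∧ u ∈ W ∧ v ∉ W}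

/-- The weight of an edge set. -/
noncomputable def cutWeight (w : Sym2 V → ℝ) (C : Set (Sym2 V)) : ℝ := ∑ᶠ e ∈ C, w e

/-- `C` is a cut of `G`: `C = E(W;G)` for some nonempty proper `W ⊆ V`. -/
def IsCut (G : SimpleGraph V) (C : Set (Sym2 V)) : Prop :=
  ∃ W : Set V, W.Nonempty ∧ W ≠ Set.univ ∧ C = cutEdges G W

/-- `C` is an `s,t`-cut of `G`. -/
def IsSTCut (G : SimpleGraph V) (C : Set (Sym2 V)) (s t : V) : Prop :=
  ∃ W : Set V, s ∈ W ∧ t ∉ W ∧ C = cutEdges G W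

/-- `C` is a minimum-weight `s,t`-cut of `G`. -/
def IsMinSTCut (G : SimpleGraph V) (w : Sym2 V → ℝ) (C : Set (Sym2 V)) (s t : V) : Prop :=
  IsSTCut G C s t ∧ ∀ C', IsSTCut G C' s t → cutWeight w C ≤ cutWeight w C'

/-- `C` is a relevant cut of `G`: a minimum `s,t`-cut for some pair of distinct vertices. -/
def RelCut (G : SimpleGraph V) (w : Sym2 V → ℝ) (C : Set (Sym2 V)) : Prop :=
  ∃ s t : V, s ≠ t ∧ IsMinSTCut G w C s t

/-- `λ(s,t;G)`: the minimum weight of an `s,t`-cut of `G`. -/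
noncomputable def lamST (G : SimpleGraph V) (w : Sym2 V → ℝ) (s t : V) : ℝ :=
  sInf (cutWeight w '' {C | IsSTCut G C s t})

/-- `X` is a partition of the vertex set into nonempty blocks. -/
def IsPartition (X : Set (Set V)) : Prop :=
  (∀ A ∈ X, A.Nonempty) ∧ X.PairwiseDisjoint id ∧ ⋃₀ X = Set.univ

/-- A cut of the contraction `G/X`, identified with the cut `E(⋃₀ S; G)` of `G` where `S`
is a nonempty proper subfamily of blocks of `X`. -/
def IsPartCut (G : SimpleGraph V) (X : Set (Set V)) (C : Set (Sym2 V)) : Prop :=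
  ∃ S : Set (Set V), S ⊆ X ∧ S.Nonempty ∧ S ≠ X ∧ C = cutEdges G (⋃₀ S)

/-- An `x_A,x_B`-cut of the contraction `G/X` (for blocks `A, B` of `X`). -/
def IsPartSTCut (G : SimpleGraph V) (X : Set (Set V)) (C : Set (Sym2 V))
    (A B : Set V) : Prop :=
  ∃ S : Set (Set V), S ⊆ X ∧ A ∈ S ∧ B ∉ S ∧ C = cutEdges G (⋃₀ S)

/-- `λ(x_A, x_B; G/X)`: the minimum weight of an `x_A,x_B`-cut of `G/X`. -/
noncomputable def lamPart (G : SimpleGraph V) (w : Sym2 V → ℝ) (X : Set (Set V))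
    (A B : Set V) : ℝ :=
  sInf (cutWeight w '' {C | IsPartSTCut G X C A B})

/-- `C` is a minimum `x_A,x_B`-cut of `G/X`. -/
def IsMinPartSTCut (G : SimpleGraph V) (w : Sym2 V → ℝ) (X : Set (Set V))
    (C : Set (Sym2 V)) (A B : Set V) : Prop :=
  IsPartSTCut G X C A B ∧ ∀ C', IsPartSTCut G X C' A B → cutWeight w C ≤ cutWeight w C'

/-- `λ_max(A,B;G) = max {λ(a,b;G) : a ∈ A, b ∈ B}`. -/
noncomputable def lamMax (G : SimpleGraph V) (w : Sym2 V → ℝ) (A B : Set V) : ℝ :=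
  sSup {x : ℝ | ∃ a ∈ A, ∃ b ∈ B, lamST G w a b = x}

/-- `(A,B)` is a pair of distinct blocks of `X` belonging to `Λ(X)`, i.e. with
`λ(x_A,x_B;G/X) = λ_max(A,B;G)`. -/
def LambdaPair (G : SimpleGraph V) (w : Sym2 V → ℝ) (X : Set (Set V))
    (A B : Set V) : Prop :=
  A ∈ X ∧ B ∈ X ∧ A ≠ B ∧ lamPart G w X A B = lamMax G w A B

/-- `C` is a relevant cut of the contraction `G/X`: a minimum `x_A,x_B`-cut of `G/X` for
some pair of distinct blocks `A, B` of `X`. -/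
def RelPartCut (G : SimpleGraph V) (w : Sym2 V → ℝ) (X : Set (Set V))
    (C : Set (Sym2 V)) : Prop :=
  ∃ A B : Set V, A ∈ X ∧ B ∈ X ∧ A ≠ B ∧ IsMinPartSTCut G w X C A B

lemma cutEdges_subset_edgeSet (G : SimpleGraph V) (W : Set V) :
    cutEdges G W ⊆ G.edgeSet := fun _ he => he.1

lemma mem_cutEdges_iff {G : SimpleGraph V} {W : Set V} {u v : V} (h : G.Adj u v) :
    s(u, v) ∈ cutEdges G W ↔ ((u ∈ W ∧ v ∉ W) ∨ (v ∈ W ∧ u ∉ W)) := by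
  constructor
  · rintro ⟨-, u', v', heq, hu', hv'⟩
    rw [Sym2.eq_iff] at heq
    rcases heq with ⟨rfl, rfl⟩ | ⟨rfl, rfl⟩
    · exact Or.inl ⟨hu', hv'⟩
    · exact Or.inr ⟨hu', hv'⟩
  · rintro (⟨hu, hv⟩ | ⟨hv, hu⟩)
    · exact ⟨G.mem_edgeSet.mpr h, u, v, rfl, hu, hv⟩
    · exact ⟨G.mem_edgeSet.mpr h, v, u, Sym2.eq_swap, hv, hu⟩

lemma cutEdges_compl (G : SimpleGraph V) (W : Set V) : cutEdges G Wᶜ = cutEdges G W := by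
  ext e
  constructor
  · rintro ⟨he, u, v, rfl, hu, hv⟩
    exact ⟨he, v, u, Sym2.eq_swap, by simpa using hv, hu⟩
  · rintro ⟨he, u, v, rfl, hu, hv⟩
    exact ⟨he, v, u, Sym2.eq_swap, hv, fun h => h hu⟩

lemma cutWeight_nonneg {G : SimpleGraph V} {w : Sym2 V → ℝ}
    (hw : ∀ e ∈ G.edgeSet, 0 ≤ w e) {C : Set (Sym2 V)} (hC : C ⊆ G.edgeSet) :
    0 ≤ cutWeight w C := by
  rw [cutWeight, finsum_mem_def]
  exact finsum_nonneg (Set.indicator_nonneg fun e he => hw e (hC he))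

lemma walk_parity {G : SimpleGraph V} {W U : Set V}
    (hWU : cutEdges G W = cutEdges G U) {s t : V} (p : G.Walk s t) :
    ((s ∈ W ↔ s ∈ U) ↔ (t ∈ W ↔ t ∈ U)) := by
  induction p with
  | nil => exact Iff.rfl
  | @cons a b c h p ih =>
    have hmem : s(a, b) ∈ cutEdges G W ↔ s(a, b) ∈ cutEdges G U := by rw [hWU]
    rw [mem_cutEdges_iff h, mem_cutEdges_iff h] at hmem
    rw [← ih]
    clear ih hWU p
    by_cases h1 : a ∈ W <;> by_cases h2 : b ∈ W <;> by_cases h3 : a ∈ U <;>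
      by_cases h4 : b ∈ U <;> simp_all

lemma sUnion_diff_of_partition {X : Set (Set V)} (hX : IsPartition X)
    {S : Set (Set V)} (hSX : S ⊆ X) : ⋃₀ (X \ S) = (⋃₀ S)ᶜ := by
  ext x
  constructor
  · rintro ⟨A, ⟨hAX, hAS⟩, hxA⟩ ⟨B, hBS, hxB⟩
    have hne : A ≠ B := fun h => hAS (h ▸ hBS)
    exact Set.disjoint_left.mp (hX.2.1 hAX (hSX hBS) hne) hxA hxB
  · intro hx
    have hxX : x ∈ ⋃₀ X := hX.2.2.symm ▸ Set.mem_univ x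
    obtain ⟨A, hAX, hxA⟩ := hxX
    have hAS : A ∉ S := fun h => hx ⟨A, h, hxA⟩
    exact ⟨A, ⟨hAX, hAS⟩, hxA⟩

lemma key_lemma {G : SimpleGraph V} {w : Sym2 V → ℝ} (hw : ∀ e ∈ G.edgeSet, 0 ≤ w e)
    {X : Set (Set V)} (hX : IsPartition X)
    {S : Set (Set V)} (hSX : S ⊆ X) {C : Set (Sym2 V)} (hC : C = cutEdges G (⋃₀ S))
    {s t : V} (hsU : s ∈ ⋃₀ S) (htU : t ∉ ⋃₀ S)
    (hmin : ∀ C', IsSTCut G C' s t → cutWeight w C ≤ cutWeight w C') :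
    ∃ A B, LambdaPair G w X A B := by
  obtain ⟨A, hAS, hsA⟩ := hsU
  have hAX : A ∈ X := hSX hAS
  have htX : t ∈ ⋃₀ X := hX.2.2.symm ▸ Set.mem_univ t
  obtain ⟨B, hBX, htB⟩ := htX
  have hBS : B ∉ S := fun h => htU ⟨B, h, htB⟩
  have hAB : A ≠ B := fun h => hBS (h ▸ hAS)
  have hstcut : ∀ C' a b, IsPartSTCut G X C' A B → a ∈ A → b ∈ B → IsSTCut G C' a b := by
    rintro C' a b ⟨S', hS'X, hAS', hBS', rfl⟩ ha hb
    refine ⟨⋃₀ S', ⟨A, hAS', ha⟩, ?_, rfl⟩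
    rintro ⟨B', hB'S', hbB'⟩
    have hne : B' ≠ B := fun h => hBS' (h ▸ hB'S')
    exact Set.disjoint_left.mp (hX.2.1 (hS'X hB'S') hBX hne) hbB' hb
  have hpart : IsPartSTCut G X C A B := ⟨S, hSX, hAS, hBS, hC⟩
  have hlbP : ∀ x ∈ cutWeight w '' {C' | IsPartSTCut G X C' A B}, (0 : ℝ) ≤ x := by
    rintro x ⟨C', ⟨S', -, -, -, rfl⟩, rfl⟩
    exact cutWeight_nonneg hw (cutEdges_subset_edgeSet G _)
  have hlbST : ∀ (a b : V), ∀ x ∈ cutWeight w '' {C' | IsSTCut G C' a b}, (0 : ℝ) ≤ x := by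
    rintro a b x ⟨C', ⟨W', -, -, rfl⟩, rfl⟩
    exact cutWeight_nonneg hw (cutEdges_subset_edgeSet G _)
  have h1 : lamPart G w X A B ≤ cutWeight w C :=
    csInf_le ⟨0, fun x hx => hlbP x hx⟩ ⟨C, hpart, rfl⟩
  have h2 : cutWeight w C ≤ lamST G w s t := by
    have hne2 : (cutWeight w '' {C' | IsSTCut G C' s t}).Nonempty :=
      ⟨cutWeight w C, C, hstcut C s t hpart hsA htB, rfl⟩
    apply le_csInf hne2
    rintro x ⟨C', hC', rfl⟩
    exact hmin C' hC'
  have h3 : lamST G w s t ≤ lamMax G w A B := by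
    apply le_csSup
    · apply Set.Finite.bddAbove
      apply Set.Finite.subset (Set.finite_range fun p : V × V => lamST G w p.1 p.2)
      rintro x ⟨a, -, b, -, rfl⟩
      exact ⟨(a, b), rfl⟩
    · exact ⟨s, hsA, t, htB, rfl⟩
  have h4 : lamMax G w A B ≤ lamPart G w X A B := by
    have hneM : {x : ℝ | ∃ a ∈ A, ∃ b ∈ B, lamST G w a b = x}.Nonempty :=
      ⟨lamST G w s t, s, hsA, t, htB, rfl⟩
    apply csSup_le hneM
    rintro x ⟨a, ha, b, hb, rfl⟩
    have hneP : (cutWeight w '' {C' | IsPartSTCut G X C' A B}).Nonempty :=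
      ⟨cutWeight w C, C, hpart, rfl⟩
    apply le_csInf hneP
    rintro y ⟨C', hC', rfl⟩
    exact csInf_le ⟨0, fun z hz => hlbST a b z hz⟩ ⟨C', hstcut C' a b hC' ha hb, rfl⟩
  exact ⟨A, B, hAX, hBX, hAB, le_antisymm (h1.trans (h2.trans h3)) h4⟩

/-- If `Λ(X) = ∅`, then no cut of the contraction `G/X` is a relevant cut of `G`. -/
theorem stmt_8 (G : SimpleGraph V) (hconn : G.Connected)
    (w : Sym2 V → ℝ) (hw : ∀ e ∈ G.edgeSet, 0 ≤ w e)
    (X : Set (Set V)) (hX : IsPartition X)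
    (hLam : ∀ A B : Set V, ¬ LambdaPair G w X A B) :
    ∀ C : Set (Sym2 V), IsPartCut G X C → ¬ RelCut G w C := by
  rintro C ⟨S, hSX, hSne, hSneX, hCS⟩ ⟨s, t, hst, ⟨W, hsW, htW, hCW⟩, hmin⟩
  have hWU : cutEdges G W = cutEdges G (⋃₀ S) := hCW.symm.trans hCS
  obtain ⟨p⟩ := hconn.preconnected s t
  have hpar := walk_parity hWU p
  have hcases : (s ∈ ⋃₀ S ∧ t ∉ ⋃₀ S) ∨ (s ∉ ⋃₀ S ∧ t ∈ ⋃₀ S) := by tauto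
  rcases hcases with ⟨hsU, htU⟩ | ⟨hsU, htU⟩
  · obtain ⟨A, B, hAB⟩ := key_lemma hw hX hSX hCS hsU htU hmin
    exact hLam A B hAB
  · have hC' : C = cutEdges G (⋃₀ (X \ S)) := by
      rw [sUnion_diff_of_partition hX hSX, cutEdges_compl]
      exact hCS
    have hsU' : s ∈ ⋃₀ (X \ S) := by
      rw [sUnion_diff_of_partition hX hSX]; exact hsU
    have htU' : t ∉ ⋃₀ (X \ S) := by
      rw [sUnion_diff_of_partition hX hSX]; exact fun h => h htU
    obtain ⟨A, B, hAB⟩ := key_lemma hw hX (Set.diff_subset) hC' hsU' htU' hmin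
    exact hLam A B hAB
end

section
/- Let r ≥ 1, let R = {e_1,…,e_r} ⊆ GF(2)^r be the root basis, and let B ≠ R be a basis of GF(2)^r. Suppose there exist e_i ∈ R and y ∈ B \ R such that P = (B \ {y}) ∪ {e_i} is a basis. Then P is the parent π(B) of B if and only if both of the following hold: (i) det(𝐏^{(e_i,j)}) = 0 for all j ∈ {i+1,…,r}; and (ii) y ≺ min(P \ R) (with the convention that (ii) holds vacuously when P \ R = ∅). -/
/-- An element: a vector in `GF(2)^r`. -/
abbrev Elt (r : ℕ) := Fin r → ZMod 2

/-- A basis: a set of `r` linearly independent vectors of `GF(2)^r`. -/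
def IsBasisSet {r : ℕ} (B : Finset (Elt r)) : Prop :=
  B.card = r ∧ LinearIndependent (ZMod 2) (Subtype.val : {x // x ∈ B} → Elt r)

/-- `bin(c) = (c_1 c_2 … c_r)₂`. -/
def binOf {r : ℕ} (c : Elt r) : ℕ := ∑ i : Fin r, (c i).val * 2 ^ (r - 1 - (i : ℕ))

/-- The `i`-th standard unit vector of `GF(2)^r`. -/
def stdVec (r : ℕ) (i : Fin r) : Elt r := fun j => if j = i then 1 else 0

/-- The root basis `R = {e_1, …, e_r}` of standard unit vectors. -/
def rootB (r : ℕ) : Finset (Elt r) := Finset.univ.image (stdVec r)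

/-- `Ex_in(B; x)`: the elements `y` such that `(x,y)` is an exchange for the basis `B`,
together with `x` itself. -/
def ExIn {r : ℕ} (B : Finset (Elt r)) (x : Elt r) : Set (Elt r) :=
  {y | y ∉ B ∧ IsBasisSet (insert y (B.erase x))} ∪ {x}

/-- The all-ones vector `𝟏`. -/
def allOnes (r : ℕ) : Elt r := fun _ => 1

/-- The all-zeros vector `𝟎`. -/
def allZeros (r : ℕ) : Elt r := fun _ => 0

/-- `Succ(c)`: the element with `bin(Succ(c)) = bin(c) + 1` if `c ∉ {𝟏, 𝟎}`, and `𝟎`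
otherwise. -/
def succElt {r : ℕ} (c : Elt r) : Elt r :=
  if c = allOnes r ∨ c = allZeros r then allZeros r
  else fun i => (((binOf c + 1) / 2 ^ (r - 1 - (i : ℕ))) % 2 : ℕ)

open Classical in
/-- The `≺`-minimum element of a set of elements (junk value if no minimum exists). -/
noncomputable def minElt {r : ℕ} (P : Set (Elt r)) : Elt r :=
  if h : ∃ c, c ∈ P ∧ ∀ d ∈ P, binOf c ≤ binOf d then h.choose else allZeros r

/-- The parent `π(B) = (B \ {min(B \ R)}) ∪ {min(R ∩ Ex_in(B; min(B \ R)))}` of a basis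
`B ≠ R`. -/
noncomputable def parentB {r : ℕ} (B : Finset (Elt r)) : Finset (Elt r) :=
  insert (minElt ((↑(rootB r) : Set (Elt r)) ∩ ExIn B (minElt ((↑B : Set (Elt r)) \ ↑(rootB r)))))
    (B.erase (minElt ((↑B : Set (Elt r)) \ ↑(rootB r))))

lemma sum_digits (N m : ℕ) : ∑ k ∈ Finset.range N, m / 2^k % 2 * 2^k = m % 2^N := by
  induction N with
  | zero => simp [Nat.mod_one]
  | succ N ih => rw [Finset.sum_range_succ, ih, pow_succ, Nat.mod_mul]; ring

lemma geom2 (N : ℕ) : ∑ k ∈ Finset.range N, 2^k = 2^N - 1 := by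
  induction N with
  | zero => simp
  | succ N ih =>
    have h2 : (2:ℕ)^(N+1) = 2 * 2^N := by rw [pow_succ]; ring
    have h1 : 1 ≤ (2:ℕ)^N := Nat.one_le_two_pow
    rw [Finset.sum_range_succ, ih]; omega

lemma binOf_eq {n : ℕ} (c : Elt (n+1)) :
    binOf c = ∑ i : Fin (n+1), (c i).val * 2 ^ (n - (i:ℕ)) := by
  unfold binOf
  apply Finset.sum_congr rfl; intro i _; congr 2

lemma binOf_lt {n : ℕ} (c : Elt (n+1)) : binOf c < 2^(n+1) := by
  rw [binOf_eq]
  have h1 : ∑ i : Fin (n+1), (c i).val * 2^(n-(i:ℕ)) ≤ ∑ i : Fin (n+1), 2^(n-(i:ℕ)) :=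
    Finset.sum_le_sum (fun i _ => by
      have h := ZMod.val_lt (c i)
      calc (c i).val * 2^(n-(i:ℕ)) ≤ 1 * 2^(n-(i:ℕ)) := Nat.mul_le_mul_right _ (by omega)
      _ = 2^(n-(i:ℕ)) := one_mul _)
  have h2 : ∑ i : Fin (n+1), 2^(n-(i:ℕ)) = 2^(n+1) - 1 := by
    rw [Fin.sum_univ_eq_sum_range (fun k => 2^(n-k)) (n+1), ← geom2 (n+1),
      ← Finset.sum_range_reflect (fun k => 2^k) (n+1)]
    apply Finset.sum_congr rfl; intro k hk; congr 1
  have h3 : 1 ≤ (2:ℕ)^(n+1) := Nat.one_le_two_pow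
  omega

lemma binOf_digits {n : ℕ} (m : ℕ) (hm : m < 2^(n+1)) :
    binOf (fun i : Fin (n+1) => ((m / 2^(n - (i:ℕ)) % 2 : ℕ) : ZMod 2)) = m := by
  rw [binOf_eq]
  calc ∑ i : Fin (n+1), (((m / 2^(n-(i:ℕ)) % 2 : ℕ) : ZMod 2)).val * 2^(n-(i:ℕ))
      = ∑ i : Fin (n+1), m / 2^(n-(i:ℕ)) % 2 * 2^(n-(i:ℕ)) :=
        Finset.sum_congr rfl (fun i _ => by rw [ZMod.val_natCast]; congr 1; omega)
    _ = ∑ k ∈ Finset.range (n+1), m / 2^(n-k) % 2 * 2^(n-k) :=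
        Fin.sum_univ_eq_sum_range (fun k => m / 2^(n-k) % 2 * 2^(n-k)) (n+1)
    _ = ∑ k ∈ Finset.range (n+1), m / 2^k % 2 * 2^k := by
        rw [← Finset.sum_range_reflect (fun k => m / 2^k % 2 * 2^k) (n+1)]
        apply Finset.sum_congr rfl; intro k hk
        have hnk : n + 1 - 1 - k = n - k := by omega
        rw [hnk]
    _ = m % 2^(n+1) := sum_digits (n+1) m
    _ = m := Nat.mod_eq_of_lt hm

lemma binOf_injective {n : ℕ} : Function.Injective (fun c : Elt (n+1) => binOf c) := by
  have hsurj : Function.Surjective (fun c : Elt (n+1) => (⟨binOf c, binOf_lt c⟩ : Fin (2^(n+1)))) := by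
    intro m
    exact ⟨fun i => ((m.1 / 2^(n-(i:ℕ)) % 2 : ℕ) : ZMod 2), Fin.ext (binOf_digits m.1 m.2)⟩
  have hcard : Fintype.card (Elt (n+1)) = Fintype.card (Fin (2^(n+1))) := by
    simp [Fintype.card_fun]
  have hbij := (Fintype.bijective_iff_surjective_and_card _).mpr ⟨hsurj, hcard⟩
  intro a b hab
  exact hbij.injective (Fin.ext hab)

lemma binOf_stdVec {n : ℕ} (j : Fin (n+1)) : binOf (stdVec (n+1) j) = 2^(n-(j:ℕ)) := by
  rw [binOf_eq, Finset.sum_eq_single j]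
  · simp [stdVec]; decide
  · intro b _ hbj; simp [stdVec, hbj]
  · intro h; exact absurd (Finset.mem_univ j) h

lemma stdVec_ne_allZeros (r : ℕ) (j : Fin r) : stdVec r j ≠ allZeros r := by
  intro h
  have := congrFun h j
  simp [stdVec, allZeros] at this

lemma mem_rootB {r : ℕ} {z : Elt r} : z ∈ rootB r ↔ ∃ j, stdVec r j = z := by
  simp [rootB]

lemma minElt_spec {r : ℕ} {S : Set (Elt r)} (hS : S.Nonempty) :
    minElt S ∈ S ∧ ∀ d ∈ S, binOf (minElt S) ≤ binOf d := by
  have h : ∃ c, c ∈ S ∧ ∀ d ∈ S, binOf c ≤ binOf d := by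
    obtain ⟨a, ha, hmin⟩ := Set.exists_min_image S binOf (Set.toFinite S) hS
    exact ⟨a, ha, hmin⟩
  rw [minElt, dif_pos h]
  exact h.choose_spec

lemma minElt_of_not_nonempty {r : ℕ} {S : Set (Elt r)} (h : ¬ S.Nonempty) :
    minElt S = allZeros r := by
  rw [minElt, dif_neg]
  rintro ⟨c, hc, -⟩
  exact h ⟨c, hc⟩

lemma minElt_eq_of {n : ℕ} {S : Set (Elt (n+1))} {c : Elt (n+1)} (hc : c ∈ S)
    (hmin : ∀ d ∈ S, binOf c ≤ binOf d) : minElt S = c := by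
  obtain ⟨h1, h2⟩ := minElt_spec ⟨c, hc⟩
  exact binOf_injective (le_antisymm (h2 c hc) (hmin _ h1))

lemma det_ne_zero_iff_li {n : ℕ} (f : Fin (n+1) → Elt (n+1)) :
    (Matrix.of f).det ≠ 0 ↔ LinearIndependent (ZMod 2) f := by
  rw [← isUnit_iff_ne_zero, ← Matrix.isUnit_iff_isUnit_det]
  exact Matrix.linearIndependent_rows_iff_isUnit.symm

lemma isBasisSet_iff_det {n : ℕ} (f : Fin (n+1) → Elt (n+1)) (hf : Function.Injective f)
    (Q : Finset (Elt (n+1))) (hQ : ∀ z, z ∈ Q ↔ ∃ k, f k = z) :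
    IsBasisSet Q ↔ (Matrix.of f).det ≠ 0 := by
  classical
  have hrange : (↑Q : Set (Elt (n+1))) = Set.range f := by
    ext z; simpa using hQ z
  have hQim : Q = Finset.image f Finset.univ := by
    ext z; simp [hQ z]
  have hcard : Q.card = n+1 := by
    rw [hQim, Finset.card_image_of_injective _ hf, Finset.card_univ, Fintype.card_fin]
  have hli : LinearIndependent (ZMod 2) (Subtype.val : {x // x ∈ Q} → Elt (n+1)) ↔
      LinearIndependent (ZMod 2) f := by
    have := linearIndepOn_range_iff (R := ZMod 2) hf id
    rw [← hrange] at this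
    exact this
  constructor
  · rintro ⟨-, h⟩; exact (det_ne_zero_iff_li f).mpr (hli.mp h)
  · intro hdet; exact ⟨hcard, hli.mpr ((det_ne_zero_iff_li f).mp hdet)⟩

lemma det_update_stdVec {n : ℕ} (ρ : Fin (n+1) → Elt (n+1)) (k₀ j : Fin (n+1)) :
    (Matrix.of (Function.update ρ k₀ (stdVec (n+1) j))).det
      = ((Matrix.of ρ).submatrix k₀.succAbove j.succAbove).det := by
  rw [Matrix.det_succ_row _ k₀, Finset.sum_eq_single j]
  · have h1 : (Matrix.of (Function.update ρ k₀ (stdVec (n+1) j))) k₀ j = 1 := by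
      simp [Function.update_self, stdVec]
    have h2 : ((Matrix.of (Function.update ρ k₀ (stdVec (n+1) j))).submatrix k₀.succAbove j.succAbove)
        = ((Matrix.of ρ).submatrix k₀.succAbove j.succAbove) := by
      ext a b
      simp [Function.update_of_ne (Fin.succAbove_ne k₀ a)]
    rw [h1, h2, show ((-1 : ZMod 2)) = 1 by decide, one_pow, one_mul, one_mul]
  · intro b _ hbj
    have h0 : (Matrix.of (Function.update ρ k₀ (stdVec (n+1) j))) k₀ b = 0 := by
      simp [Function.update_self, stdVec, hbj]
    rw [h0, mul_zero, zero_mul]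
  · intro h; exact absurd (Finset.mem_univ j) h

/-- Let `B ≠ R` be a basis, `e_i ∈ R`, `y ∈ B \ R`, and suppose
`P = (B \ {y}) ∪ {e_i}` is a basis, with rows enumerated by `ρ` and the row of `e_i`
indexed by `k₀`. Then `P` is the parent `π(B)` of `B` if and only if
(i) `det 𝐏^{(e_i,j)} = 0` for all `j > i`, and (ii) `y ≺ min(P \ R)`
(vacuously, `y` is `≺`-below every element of `P \ R`). -/
theorem stmt_14 (n : ℕ) (B : Finset (Elt (n + 1))) (hB : IsBasisSet B)
    (hne : B ≠ rootB (n + 1))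
    (i : Fin (n + 1)) (y : Elt (n + 1)) (hyB : y ∈ B) (hyR : y ∉ rootB (n + 1))
    (P : Finset (Elt (n + 1))) (hP : P = insert (stdVec (n + 1) i) (B.erase y))
    (hPbasis : IsBasisSet P)
    (ρ : Fin (n + 1) → Elt (n + 1)) (hρinj : Function.Injective ρ)
    (hρim : ∀ z, z ∈ P ↔ ∃ k, ρ k = z)
    (k₀ : Fin (n + 1)) (hk₀ : ρ k₀ = stdVec (n + 1) i) :
    P = parentB B ↔
      ((∀ j : Fin (n + 1), i < j →
          ((Matrix.of ρ).submatrix k₀.succAbove j.succAbove).det = 0) ∧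
        ∀ z ∈ P, z ∉ rootB (n + 1) → binOf y < binOf z) := by
  classical
  have hstdR : ∀ j : Fin (n+1), stdVec (n+1) j ∈ rootB (n+1) :=
    fun j => Finset.mem_image_of_mem _ (Finset.mem_univ j)
  have hyne : ∀ j : Fin (n+1), y ≠ stdVec (n+1) j := fun j h => hyR (h ▸ hstdR j)
  have hcardBe : (B.erase y).card = n := by
    rw [Finset.card_erase_of_mem hyB, hB.1]
    omega
  have heBe : stdVec (n+1) i ∉ B.erase y := by
    intro h
    have h1 : P.card = n := by rw [hP, Finset.insert_eq_self.mpr h, hcardBe]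
    have h2 := hPbasis.1
    omega
  have heB : stdVec (n+1) i ∉ B :=
    fun h => heBe (Finset.mem_erase.mpr ⟨(hyne i).symm, h⟩)
  have hrk : ∀ k, k ≠ k₀ → ρ k ∈ B.erase y := by
    intro k hk
    have hkP : ρ k ∈ P := (hρim (ρ k)).mpr ⟨k, rfl⟩
    rw [hP] at hkP
    rcases Finset.mem_insert.mp hkP with h | h
    · exact absurd (hρinj (h.trans hk₀.symm)) hk
    · exact h
  have hmem_erase : ∀ z ∈ B.erase y, ∃ k, k ≠ k₀ ∧ ρ k = z := by
    intro z hz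
    obtain ⟨k, hkz⟩ := (hρim z).mp (by rw [hP]; exact Finset.mem_insert_of_mem hz)
    refine ⟨k, ?_, hkz⟩
    rintro rfl
    rw [hk₀] at hkz
    exact heBe (by rwa [← hkz] at hz)
  have hQ : ∀ j : Fin (n+1), ∀ z,
      z ∈ insert (stdVec (n+1) j) (B.erase y) ↔
        ∃ k, Function.update ρ k₀ (stdVec (n+1) j) k = z := by
    intro j z
    constructor
    · intro hz
      rcases Finset.mem_insert.mp hz with h | h
      · exact ⟨k₀, by rw [Function.update_self, h]⟩
      · obtain ⟨k, hk, hkz⟩ := hmem_erase _ h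
        exact ⟨k, by rw [Function.update_of_ne hk]; exact hkz⟩
    · rintro ⟨k, rfl⟩
      by_cases hk : k = k₀
      · subst hk; rw [Function.update_self]; exact Finset.mem_insert_self _ _
      · rw [Function.update_of_ne hk]; exact Finset.mem_insert_of_mem (hrk k hk)
  have hExIn : ∀ j : Fin (n+1),
      (stdVec (n+1) j ∈ ExIn B y ↔
        ((Matrix.of ρ).submatrix k₀.succAbove j.succAbove).det ≠ 0) := by
    intro j
    rw [← det_update_stdVec ρ k₀ j]
    simp only [ExIn, Set.mem_union, Set.mem_setOf_eq, Set.mem_singleton_iff]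
    constructor
    · rintro (⟨hnB, hbasis⟩ | heq)
      · have hfinj : Function.Injective (Function.update ρ k₀ (stdVec (n+1) j)) := by
          intro a b hab
          by_cases ha : a = k₀ <;> by_cases hb : b = k₀
          · rw [ha, hb]
          · subst ha
            rw [Function.update_self, Function.update_of_ne hb] at hab
            have hmem : stdVec (n+1) j ∈ B.erase y := by rw [hab]; exact hrk b hb
            exact absurd (Finset.mem_of_mem_erase hmem) hnB
          · subst hb
            rw [Function.update_self, Function.update_of_ne ha] at hab
            have hmem : stdVec (n+1) j ∈ B.erase y := by rw [← hab]; exact hrk a ha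
            exact absurd (Finset.mem_of_mem_erase hmem) hnB
          · rw [Function.update_of_ne ha, Function.update_of_ne hb] at hab
            exact hρinj hab
        exact (isBasisSet_iff_det _ hfinj _ (hQ j)).mp hbasis
      · exact absurd heq.symm (hyne j)
    · intro hdet
      have hli := (det_ne_zero_iff_li _).mp hdet
      have hfinj := hli.injective
      have hnBe : stdVec (n+1) j ∉ B.erase y := by
        intro hmem
        obtain ⟨k, hk, hkz⟩ := hmem_erase _ hmem
        have hfe : Function.update ρ k₀ (stdVec (n+1) j) k
            = Function.update ρ k₀ (stdVec (n+1) j) k₀ := by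
          rw [Function.update_of_ne hk, Function.update_self, hkz]
        exact hk (hfinj hfe)
      left
      exact ⟨fun hmem => hnBe (Finset.mem_erase.mpr ⟨(hyne j).symm, hmem⟩),
        (isBasisSet_iff_det _ hfinj _ (hQ j)).mpr hdet⟩
  have hzeroB : allZeros (n+1) ∉ B := by
    intro h
    have hnz := hB.2.ne_zero (⟨allZeros (n+1), h⟩ : {x // x ∈ B})
    exact hnz rfl
  have hparent : parentB B =
      insert (minElt ((↑(rootB (n+1)) : Set (Elt (n+1))) ∩
        ExIn B (minElt ((↑B : Set (Elt (n+1))) \ ↑(rootB (n+1))))))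
        (B.erase (minElt ((↑B : Set (Elt (n+1))) \ ↑(rootB (n+1))))) := rfl
  have hBRne : (((↑B : Set (Elt (n+1))) \ ↑(rootB (n+1)))).Nonempty :=
    ⟨y, Finset.mem_coe.mpr hyB, fun h => hyR (Finset.mem_coe.mp h)⟩
  have hmspec := minElt_spec hBRne
  have hmB : minElt ((↑B : Set (Elt (n+1))) \ ↑(rootB (n+1))) ∈ B := hmspec.1.1
  have hmR : minElt ((↑B : Set (Elt (n+1))) \ ↑(rootB (n+1))) ∉ rootB (n+1) := hmspec.1.2
  constructor
  · intro hPeq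
    have hmP : minElt ((↑B : Set (Elt (n+1))) \ ↑(rootB (n+1))) ∉ parentB B := by
      rw [hparent]
      intro h
      rcases Finset.mem_insert.mp h with h | h
      · by_cases hS : ((↑(rootB (n+1)) : Set (Elt (n+1))) ∩
            ExIn B (minElt ((↑B : Set (Elt (n+1))) \ ↑(rootB (n+1))))).Nonempty
        · have hmem := (minElt_spec hS).1.1
          rw [← h] at hmem
          exact hmR (Finset.mem_coe.mp hmem)
        · rw [minElt_of_not_nonempty hS] at h
          rw [h] at hmB
          exact hzeroB hmB
      · exact (Finset.mem_erase.mp h).1 rfl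
    have hmy : minElt ((↑B : Set (Elt (n+1))) \ ↑(rootB (n+1))) = y := by
      rw [← hPeq, hP] at hmP
      by_contra hne'
      exact hmP (Finset.mem_insert_of_mem (Finset.mem_erase.mpr ⟨hne', hmB⟩))
    have heP : stdVec (n+1) i ∈ parentB B := by
      rw [← hPeq, hP]; exact Finset.mem_insert_self _ _
    rw [hparent, hmy] at heP
    have he_eq : minElt ((↑(rootB (n+1)) : Set (Elt (n+1))) ∩ ExIn B y) = stdVec (n+1) i := by
      rcases Finset.mem_insert.mp heP with h | h
      · exact h.symm
      · exact absurd h heBe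
    have hSne : ((↑(rootB (n+1)) : Set (Elt (n+1))) ∩ ExIn B y).Nonempty := by
      by_contra hS
      rw [minElt_of_not_nonempty hS] at he_eq
      exact stdVec_ne_allZeros (n+1) i he_eq.symm
    have hSspec := minElt_spec hSne
    rw [he_eq] at hSspec
    refine ⟨?_, ?_⟩
    · intro j hij
      by_contra hdet
      have hjEx : stdVec (n+1) j ∈ ExIn B y := (hExIn j).mpr hdet
      have hle := hSspec.2 (stdVec (n+1) j) ⟨Finset.mem_coe.mpr (hstdR j), hjEx⟩
      rw [binOf_stdVec, binOf_stdVec] at hle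
      have h1 : (i:ℕ) < (j:ℕ) := hij
      have h2 : (j:ℕ) < n+1 := j.isLt
      have h3 : (2:ℕ)^(n-(j:ℕ)) < 2^(n-(i:ℕ)) :=
        Nat.pow_lt_pow_right (by norm_num) (by omega)
      omega
    · intro z hz hzR
      rw [hP] at hz
      rcases Finset.mem_insert.mp hz with h | h
      · exact absurd (h ▸ hstdR i) hzR
      · have hzBR : z ∈ (↑B : Set (Elt (n+1))) \ ↑(rootB (n+1)) :=
          ⟨Finset.mem_coe.mpr (Finset.mem_of_mem_erase h), fun hc => hzR (Finset.mem_coe.mp hc)⟩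
        have hle := hmspec.2 z hzBR
        rw [hmy] at hle
        have hne' : y ≠ z := fun h' => (Finset.mem_erase.mp h).1 h'.symm
        have hbne : binOf y ≠ binOf z := fun h' => hne' (binOf_injective h')
        omega
  · rintro ⟨hdets, hlt⟩
    have hmy : minElt ((↑B : Set (Elt (n+1))) \ ↑(rootB (n+1))) = y := by
      by_contra hmy
      have hmP : minElt ((↑B : Set (Elt (n+1))) \ ↑(rootB (n+1))) ∈ P := by
        rw [hP]
        exact Finset.mem_insert_of_mem (Finset.mem_erase.mpr ⟨hmy, hmB⟩)
      have h1 := hlt _ hmP hmR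
      have h2 := hmspec.2 y ⟨Finset.mem_coe.mpr hyB, fun h => hyR (Finset.mem_coe.mp h)⟩
      omega
    have he_min : minElt ((↑(rootB (n+1)) : Set (Elt (n+1))) ∩ ExIn B y) = stdVec (n+1) i := by
      apply minElt_eq_of
      · exact ⟨Finset.mem_coe.mpr (hstdR i),
          Or.inl ⟨heB, by rw [← hP]; exact hPbasis⟩⟩
      · rintro d ⟨hdR, hdEx⟩
        obtain ⟨j, rfl⟩ := mem_rootB.mp (Finset.mem_coe.mp hdR)
        rw [binOf_stdVec, binOf_stdVec]
        rcases lt_or_ge i j with hij | hij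
        · exact absurd (hdets j hij) ((hExIn j).mp hdEx)
        · have hji : (j:ℕ) ≤ (i:ℕ) := hij
          exact Nat.pow_le_pow_right (by norm_num) (by omega)
    rw [hP, hparent, hmy, he_min]
end
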